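/- Let k contain i with i² = −1 and invertible A, V = k², R = A·1 + A⁻¹·∩∪ (the bracket YBO) and R⁻¹ = A⁻¹·1 + A·∩∪. Suppose B, B̄, C, C̄ ∈ k and set φ = B·1 + B̄·∩∪, φ̂ = C̄·1 + C·∩∪. If B = C, B̄ = C̄, B̄ = −A⁻²B, and 2(A⁴−1)B = 0, then (R + ℏφ)(R⁻¹ + ℏφ̂) = 1 modulo ℏ². -/
import Mathlib


open TensorProduct

set_option synthInstance.maxHeartbeats 400000
set_option maxHeartbeats 1000000

/-- The Kauffman bracket pairing `∪ : V ⊗ V → k` on `V = k²`. -/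
noncomputable def bracketCup (k : Type*) [CommRing k] (i : k) (A : kˣ) :
    ((Fin 2 → k) ⊗[k] (Fin 2 → k)) →ₗ[k] k :=
  (((Pi.basisFun k (Fin 2)).tensorProduct (Pi.basisFun k (Fin 2))).constr k) fun p =>
    if p = (0, 1) then i * (A : k) else if p = (1, 0) then -(i * ((A⁻¹ : kˣ) : k)) else 0

/-- The Kauffman bracket copairing `∩ : k → V ⊗ V`. -/
noncomputable def bracketCap (k : Type*) [CommRing k] (i : k) (A : kˣ) :
    k →ₗ[k] ((Fin 2 → k) ⊗[k] (Fin 2 → k)) :=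
  LinearMap.toSpanSingleton k _
    ((i * (A : k)) • ((Pi.basisFun k (Fin 2)) 0 ⊗ₜ[k] (Pi.basisFun k (Fin 2)) 1)
      - (i * ((A⁻¹ : kˣ) : k)) • ((Pi.basisFun k (Fin 2)) 1 ⊗ₜ[k] (Pi.basisFun k (Fin 2)) 0))

/-- The operator `S + ℏ T` acting on `Ṽ ⊗ Ṽ`, where `Ṽ = (k[ℏ]/(ℏ²)) ⊗ V` is realized via
dual numbers. -/
noncomputable def hbarDeform (k : Type*) [CommRing k] (V : Type*) [AddCommGroup V] [Module k V]
    (S T : V ⊗[k] V →ₗ[k] V ⊗[k] V) :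
    ((DualNumber k ⊗[k] V) ⊗[DualNumber k] (DualNumber k ⊗[k] V)) →ₗ[DualNumber k]
      ((DualNumber k ⊗[k] V) ⊗[DualNumber k] (DualNumber k ⊗[k] V)) :=
  (TensorProduct.AlgebraTensorModule.distribBaseChange k (DualNumber k) V V).toLinearMap ∘ₗ
    (LinearMap.baseChange (DualNumber k) S
      + (DualNumber.eps : DualNumber k) • LinearMap.baseChange (DualNumber k) T) ∘ₗ
    (TensorProduct.AlgebraTensorModule.distribBaseChange k (DualNumber k) V V).symm.toLinearMap

lemma cup_apply_01 (k : Type*) [CommRing k] (i : k) (A : kˣ) :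
    bracketCup k i A ((Pi.basisFun k (Fin 2)) 0 ⊗ₜ[k] (Pi.basisFun k (Fin 2)) 1)
      = i * (A : k) := by
  rw [bracketCup, ← Module.Basis.tensorProduct_apply, Module.Basis.constr_basis]; simp

lemma cup_apply_10 (k : Type*) [CommRing k] (i : k) (A : kˣ) :
    bracketCup k i A ((Pi.basisFun k (Fin 2)) 1 ⊗ₜ[k] (Pi.basisFun k (Fin 2)) 0)
      = -(i * ((A⁻¹ : kˣ) : k)) := by
  rw [bracketCup, ← Module.Basis.tensorProduct_apply, Module.Basis.constr_basis]; simp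

lemma cup_cap (k : Type*) [CommRing k] (i : k) (hi : i * i = -1) (A : kˣ) :
    bracketCup k i A ∘ₗ bracketCap k i A
      = (-(A : k)^2 - ((A⁻¹ : kˣ) : k)^2) • LinearMap.id := by
  apply LinearMap.ext_ring
  simp only [LinearMap.comp_apply, bracketCap, LinearMap.toSpanSingleton_apply, one_smul,
    map_sub, map_smul, cup_apply_01, cup_apply_10, LinearMap.smul_apply, LinearMap.id_apply,
    smul_eq_mul, mul_one]
  linear_combination ((A : k)^2 + ((A⁻¹ : kˣ) : k)^2) * hi

lemma capcup_sq (k : Type*) [CommRing k] (i : k) (hi : i * i = -1) (A : kˣ) :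
    (bracketCap k i A ∘ₗ bracketCup k i A) ∘ₗ (bracketCap k i A ∘ₗ bracketCup k i A)
      = (-(A : k)^2 - ((A⁻¹ : kˣ) : k)^2) • (bracketCap k i A ∘ₗ bracketCup k i A) := by
  rw [LinearMap.comp_assoc, ← LinearMap.comp_assoc (bracketCup k i A), cup_cap k i hi A,
    LinearMap.smul_comp, LinearMap.id_comp, LinearMap.comp_smul]

lemma hbar_key1 {k : Type*} [CommRing k] {M : Type*} [AddCommGroup M] [Module k M]
    (N : M →ₗ[k] M) (A A' : k) (hN : N ∘ₗ N = (-A^2 - A'^2) • N) (hA : A * A' = 1) :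
    (A • LinearMap.id + A' • N) ∘ₗ (A' • LinearMap.id + A • N) = LinearMap.id := by
  simp only [LinearMap.add_comp, LinearMap.comp_add, LinearMap.smul_comp, LinearMap.comp_smul,
    LinearMap.id_comp, LinearMap.comp_id, hN, smul_smul]
  match_scalars
  · linear_combination hA
  · linear_combination (-(A^2 + A'^2)) * hA

lemma hbar_key2 {k : Type*} [CommRing k] {M : Type*} [AddCommGroup M] [Module k M]
    (N : M →ₗ[k] M) (A A' B : k) (hN : N ∘ₗ N = (-A^2 - A'^2) • N)
    (hA : A * A' = 1) (h4 : 2 * (A ^ 4 - 1) * B = 0) :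
    (A • LinearMap.id + A' • N) ∘ₗ ((-(A' ^ 2) * B) • LinearMap.id + B • N)
       + (B • LinearMap.id + (-(A' ^ 2) * B) • N) ∘ₗ (A' • LinearMap.id + A • N) = 0 := by
  simp only [LinearMap.add_comp, LinearMap.comp_add, LinearMap.smul_comp, LinearMap.comp_smul,
    LinearMap.id_comp, LinearMap.comp_id, hN, smul_smul]
  match_scalars
  · linear_combination (-A'*B) * hA
  · linear_combination A'^3 * h4 + (B*(-2*A^3*A'^2 - A^2*A' - 2*A + A'^3)) * hA

/-- For the bracket YBO `R = A·1 + A⁻¹·∩∪` with `R⁻¹ = A⁻¹·1 + A·∩∪`, and the deformation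
cochains `φ = B·1 + B̄·∩∪`, `φ̂ = C̄·1 + C·∩∪`: if `B = C`, `B̄ = C̄`, `B̄ = −A⁻²B` and
`2(A⁴−1)B = 0`, then `(R + ℏφ)(R⁻¹ + ℏφ̂) = 1` modulo `ℏ²`. -/
theorem bracket_deformation_inverse (k : Type*) [CommRing k] (i : k) (hi : i * i = -1)
    (A : kˣ) (B Bbar C Cbar : k)
    (h1 : B = C) (h2 : Bbar = Cbar) (h3 : Bbar = -(((A⁻¹ : kˣ) : k) ^ 2) * B)
    (h4 : 2 * ((A : k) ^ 4 - 1) * B = 0) :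
    hbarDeform k (Fin 2 → k)
        ((A : k) • LinearMap.id + ((A⁻¹ : kˣ) : k) • (bracketCap k i A ∘ₗ bracketCup k i A))
        (B • LinearMap.id + Bbar • (bracketCap k i A ∘ₗ bracketCup k i A)) ∘ₗ
      hbarDeform k (Fin 2 → k)
        (((A⁻¹ : kˣ) : k) • LinearMap.id + (A : k) • (bracketCap k i A ∘ₗ bracketCup k i A))
        (Cbar • LinearMap.id + C • (bracketCap k i A ∘ₗ bracketCup k i A))
      = LinearMap.id := by
  subst h1 h2 h3
  set N := bracketCap k i A ∘ₗ bracketCup k i A with hNdef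
  set a : k := (A : k)
  set a' : k := ((A⁻¹ : kˣ) : k)
  have hA : a * a' = 1 := by simp [a, a']
  have hN : N ∘ₗ N = (-a^2 - a'^2) • N := capcup_sq k i hi A
  set S₁ : (Fin 2 → k) ⊗[k] (Fin 2 → k) →ₗ[k] (Fin 2 → k) ⊗[k] (Fin 2 → k) :=
    a • LinearMap.id + a' • N with hS₁
  set S₂ : (Fin 2 → k) ⊗[k] (Fin 2 → k) →ₗ[k] (Fin 2 → k) ⊗[k] (Fin 2 → k) :=
    a' • LinearMap.id + a • N with hS₂
  set T₁ : (Fin 2 → k) ⊗[k] (Fin 2 → k) →ₗ[k] (Fin 2 → k) ⊗[k] (Fin 2 → k) :=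
    B • LinearMap.id + (-(a' ^ 2) * B) • N with hT₁
  set T₂ : (Fin 2 → k) ⊗[k] (Fin 2 → k) →ₗ[k] (Fin 2 → k) ⊗[k] (Fin 2 → k) :=
    (-(a' ^ 2) * B) • LinearMap.id + B • N with hT₂
  have hSS : S₁ ∘ₗ S₂ = LinearMap.id := hbar_key1 N a a' hN hA
  have hST : S₁ ∘ₗ T₂ + T₁ ∘ₗ S₂ = 0 := hbar_key2 N a a' B hN hA h4
  have key : ∀ y, (LinearMap.baseChange (DualNumber k) S₁
      + (DualNumber.eps : DualNumber k) • LinearMap.baseChange (DualNumber k) T₁)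
      ((LinearMap.baseChange (DualNumber k) S₂
      + (DualNumber.eps : DualNumber k) • LinearMap.baseChange (DualNumber k) T₂) y) = y := by
    intro y
    have h1 : (S₁.baseChange (DualNumber k)) ((S₂.baseChange (DualNumber k)) y) = y := by
      rw [← LinearMap.comp_apply, ← LinearMap.baseChange_comp, hSS, LinearMap.baseChange_id,
        LinearMap.id_apply]
    have h2 : (T₁.baseChange (DualNumber k)) ((S₂.baseChange (DualNumber k)) y)
        + (S₁.baseChange (DualNumber k)) ((T₂.baseChange (DualNumber k)) y) = 0 := by
      rw [← LinearMap.comp_apply, ← LinearMap.comp_apply, ← LinearMap.baseChange_comp,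
        ← LinearMap.baseChange_comp, ← LinearMap.add_apply, ← LinearMap.baseChange_add,
        show T₁ ∘ₗ S₂ + S₁ ∘ₗ T₂ = 0 from by rw [add_comm]; exact hST,
        LinearMap.baseChange_zero, LinearMap.zero_apply]
    simp only [LinearMap.add_apply, LinearMap.smul_apply, map_add, map_smul, smul_smul,
      DualNumber.eps_mul_eps, zero_smul, add_zero, h1]
    rw [smul_add, ← mul_smul, DualNumber.eps_mul_eps, zero_smul, add_zero, add_assoc, ← smul_add, h2,
      smul_zero, add_zero]
  refine LinearMap.ext fun x => ?_
  simp only [hbarDeform, LinearMap.comp_apply, LinearEquiv.coe_coe, LinearEquiv.symm_apply_apply]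
  rw [key]
  simp
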